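/- arXiv:1708.04990 — 11 statements merged into one kernel-verified Lean document; each statement's English description precedes it below -/
import Mathlib

section
/- Let P be a partially ordered set, K a join-completion of P, and L a subset of K containing P, equipped with the induced order. Then L is a join-completion of P if and only if L is a closure system of K (that is, for every x in K, the set {p in L : x ≤ p} has a least element). -/
/-!
A set `X` with least upper bound `x` has `Ici x` as its set of upper bounds. Hence the least
element of `L ∩ Ici x` (the closure of `x` in `L`) is the same thing as the least upper bound
within `L` of `X`. Going one way, take `X ⊆ P ⊆ L` with join `x`; going the other way, take
`x = sSup X`.
-/

open Set

section

variable {K : Type*} [Preorder K] {L S : Set K} {x a : K}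

lemma isLeast_inter_Ici_iff :
    IsLeast (L ∩ Ici x) a ↔ a ∈ L ∧ x ≤ a ∧ ∀ b ∈ L, x ≤ b → a ≤ b := by
  simp only [IsLeast, lowerBounds, mem_inter_iff, mem_Ici, mem_ofPred_eq, and_imp, and_assoc]

lemma isLeast_inter_upperBounds_iff :
    IsLeast (L ∩ upperBounds S) a ↔
      a ∈ L ∧ (∀ s ∈ S, s ≤ a) ∧ ∀ b ∈ L, (∀ s ∈ S, s ≤ b) → a ≤ b := by
  simp only [IsLeast, lowerBounds, upperBounds, mem_inter_iff, mem_ofPred_eq, and_imp, and_assoc]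

lemma IsLUB.isLeast_inter_upperBounds_iff (h : IsLUB S x) :
    IsLeast (L ∩ upperBounds S) a ↔ IsLeast (L ∩ Ici x) a := by
  rw [h.upperBounds_eq]

lemma exists_isLeast_inter_Ici_of_forall_exists_isLeast_inter_upperBounds
    (hdense : ∀ x, ∃ X ⊆ L, IsLUB X x)
    (hsup : ∀ S ⊆ L, ∃ a, IsLeast (L ∩ upperBounds S) a) (x : K) :
    ∃ a, IsLeast (L ∩ Ici x) a := by
  obtain ⟨X, hXL, hX⟩ := hdense x
  simpa only [hX.isLeast_inter_upperBounds_iff] using hsup X hXL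

end

lemma exists_isLeast_inter_upperBounds_of_forall_exists_isLeast_inter_Ici {K : Type*}
    [CompleteLattice K] {L : Set K} (hcl : ∀ x, ∃ a, IsLeast (L ∩ Ici x) a) (S : Set K) :
    ∃ a, IsLeast (L ∩ upperBounds S) a := by
  simpa only [(isLUB_sSup S).isLeast_inter_upperBounds_iff] using hcl (sSup S)

/-- Let `P ⊆ L ⊆ K` where `K` is a complete lattice in which `P` is
join-dense (so `K` is a join-completion of `P`).  Then `L`, with the induced
order, is a join-completion of `P` (i.e. every subset of `L` has a least upper
bound within `L`, and every element of `L` is a join within `L` of elements of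
`P`) if and only if `L` is a closure system of `K` (for every `x ∈ K`, the set
`{p ∈ L : x ≤ p}` has a least element). -/
theorem joinCompletion_iff_closureSystem {K : Type*} [CompleteLattice K]
    (P L : Set K) (hPL : P ⊆ L)
    (hK : ∀ x : K, ∃ X ⊆ P, IsLUB X x) :
    ((∀ S : Set K, S ⊆ L →
        ∃ a ∈ L, (∀ s ∈ S, s ≤ a) ∧ ∀ b ∈ L, (∀ s ∈ S, s ≤ b) → a ≤ b) ∧
     (∀ l ∈ L, ∃ X ⊆ P, (∀ x ∈ X, x ≤ l) ∧ ∀ b ∈ L, (∀ x ∈ X, x ≤ b) → l ≤ b))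
    ↔ (∀ x : K, ∃ a ∈ L, x ≤ a ∧ ∀ b ∈ L, x ≤ b → a ≤ b) := by
  simp only [← isLeast_inter_Ici_iff, ← isLeast_inter_upperBounds_iff]
  constructor
  · rintro ⟨hsup, -⟩
    refine exists_isLeast_inter_Ici_of_forall_exists_isLeast_inter_upperBounds (fun x ↦ ?_) hsup
    obtain ⟨X, hXP, hX⟩ := hK x
    exact ⟨X, hXP.trans hPL, hX⟩
  · intro hcl
    refine ⟨fun S _ ↦ exists_isLeast_inter_upperBounds_of_forall_exists_isLeast_inter_Ici hcl S,
      fun l _ ↦ ?_⟩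
    obtain ⟨X, hXP, hX⟩ := hK l
    exact ⟨X, hXP, hX.1, fun b _ hb ↦ hX.2 hb⟩
end

section
/- Let P be a partially ordered monoid and L a join-extension of P which is also a partially ordered monoid with multiplication extending that of P. Then for all a, b ∈ P, if the left residual a\b = max{x ∈ P : ax ≤ b} exists in P, then max{x ∈ L : ax ≤ b} exists in L and equals a\b (and similarly for right residuals). -/
/-!
Each `x ∈ L` is the join of the elements of `P` below it. When `a * x ≤ b`, each of those
elements `y` also satisfies `a * y ≤ b`, so `y ≤ a\b` by maximality in `P`, and therefore
`x ≤ a\b`. The same argument works on the other side.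
-/

theorem IsLowerSet.mem_upperBounds_of_inter {L : Type*} [Preorder L] {P S : Set L}
    (hdense : ∀ l : L, ∃ X ⊆ P, IsLUB X l) (hS : IsLowerSet S) {c : L}
    (hc : c ∈ upperBounds (S ∩ P)) : c ∈ upperBounds S := by
  intro x hx
  obtain ⟨X, hXP, hX⟩ := hdense x
  exact hX.2 fun y hy => hc ⟨hS (hX.1 hy) hx, hXP hy⟩

theorem residuals_preserved_in_joinExtension_general {L : Type*} [Monoid L] [PartialOrder L]
    (hmul : ∀ a b c d : L, a ≤ b → c ≤ d → a * c ≤ b * d)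
    (P : Set L)
    (hdense : ∀ l : L, ∃ X ⊆ P, IsLUB X l)
    (a b : L) :
    (∀ c ∈ P, (a * c ≤ b ∧ ∀ x ∈ P, a * x ≤ b → x ≤ c) →
      (a * c ≤ b ∧ ∀ x : L, a * x ≤ b → x ≤ c)) ∧
    (∀ c' ∈ P, (c' * a ≤ b ∧ ∀ x ∈ P, x * a ≤ b → x ≤ c') →
      (c' * a ≤ b ∧ ∀ x : L, x * a ≤ b → x ≤ c')) := by
  have hleft : Monotone (a * ·) := fun _ _ h => hmul a a _ _ le_rfl h
  have hright : Monotone (· * a) := fun _ _ h => hmul _ _ a a h le_rfl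
  constructor
  · rintro c - ⟨hac, hmax⟩
    exact ⟨hac, fun x hx => ((isLowerSet_Iic b).preimage hleft).mem_upperBounds_of_inter
      hdense (fun y ⟨hy, hyP⟩ => hmax y hyP hy) hx⟩
  · rintro c - ⟨hca, hmax⟩
    exact ⟨hca, fun x hx => ((isLowerSet_Iic b).preimage hright).mem_upperBounds_of_inter
      hdense (fun y ⟨hy, hyP⟩ => hmax y hyP hy) hx⟩

/-- Let `P` be a pomonoid (modeled as a join-dense submonoid of a
pomonoid `L`, with the multiplication of `L` extending that of `P`).  For
`a, b ∈ P`: if `max {x ∈ P : a*x ≤ b}` exists (witnessed by `c`), then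
`max {x ∈ L : a*x ≤ b}` exists and equals `c`; similarly for right residuals
(witnessed by `c'`). -/
theorem residuals_preserved_in_joinExtension {L : Type*} [Monoid L] [PartialOrder L]
    (hmul : ∀ a b c d : L, a ≤ b → c ≤ d → a * c ≤ b * d)
    (P : Set L) (h1 : (1 : L) ∈ P) (hPmul : ∀ x ∈ P, ∀ y ∈ P, x * y ∈ P)
    (hdense : ∀ l : L, ∃ X ⊆ P, IsLUB X l)
    (a b : L) (ha : a ∈ P) (hb : b ∈ P) :
    (∀ c ∈ P, (a * c ≤ b ∧ ∀ x ∈ P, a * x ≤ b → x ≤ c) →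
      (a * c ≤ b ∧ ∀ x : L, a * x ≤ b → x ≤ c)) ∧
    (∀ c' ∈ P, (c' * a ≤ b ∧ ∀ x ∈ P, x * a ≤ b → x ≤ c') →
      (c' * a ≤ b ∧ ∀ x : L, x * a ≤ b → x ≤ c')) :=
  residuals_preserved_in_joinExtension_general hmul P hdense a b
end

section
/- The Dedekind-MacNeille completion of a residuated partially ordered monoid P carries a unique structure of a (complete) residuated lattice whose multiplication extends that of P, and the embedding of P into its Dedekind-MacNeille completion preserves products, residuals, and all existing meets. -/
/-- The Dedekind-MacNeille completion of a poset `P`: the collection of subsets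
that are intersections of principal down-sets, i.e. the cuts
`A = lowerBounds (upperBounds A)`. -/
def DMset (P : Type*) [PartialOrder P] : Set (Set P) :=
  {A | lowerBounds (upperBounds A) = A}

/-- The Dedekind-MacNeille completion as a poset (ordered by inclusion). -/
def DM (P : Type*) [PartialOrder P] : Type _ := {A : Set P // A ∈ DMset P}

instance (P : Type*) [PartialOrder P] : PartialOrder (DM P) :=
  Subtype.partialOrder _

theorem Iic_mem_DMset {P : Type*} [PartialOrder P] (p : P) : Set.Iic p ∈ DMset P := by
  apply Set.Subset.antisymm
  · intro q hq
    exact hq (fun x hx => hx)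
  · intro q hq r hr
    exact le_trans hq (hr (le_refl p))

/-- The canonical embedding of `P` into its Dedekind-MacNeille completion. -/
def dmEmb {P : Type*} [PartialOrder P] (p : P) : DM P := ⟨Set.Iic p, Iic_mem_DMset p⟩

/-! The product of two cuts is the cut generated by their pointwise product. Because
multiplication by a fixed element of `P` has a right adjoint, replacing either factor of a
pointwise product by its cut does not change the upper bounds of the product; associativity,
the unit laws and the extension of the product of `P` all follow from this.

The residuals of cuts are again cuts, `A \ C = lowerBounds (ld A (upperBounds C))`, so
multiplication by a cut on either side is a lower adjoint and preserves all joins. Every cut is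
the join of the principal cuts below it, so a product preserving joins in each argument is
determined by its values on `P`. -/

open scoped Pointwise

namespace DM

variable {P : Type*} [PartialOrder P]

def cutClosure (A : Set P) : Set P := lowerBounds (upperBounds A)

theorem subset_cutClosure (A : Set P) : A ⊆ cutClosure A :=
  subset_lowerBounds_upperBounds A

theorem upperBounds_cutClosure (A : Set P) : upperBounds (cutClosure A) = upperBounds A :=
  gc_upperBounds_lowerBounds.l_u_l_eq_l A

theorem lowerBounds_mem_DMset (T : Set P) : lowerBounds T ∈ DMset P :=
  gc_upperBounds_lowerBounds.u_l_u_eq_u (OrderDual.toDual T)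

theorem cutClosure_mem_DMset (A : Set P) : cutClosure A ∈ DMset P :=
  lowerBounds_mem_DMset _

theorem cutClosure_singleton (p : P) : cutClosure {p} = Set.Iic p := by
  rw [cutClosure, upperBounds_singleton, lowerBounds_Ici]

theorem cutClosure_subset_iff {A C : Set P} (hC : C ∈ DMset P) :
    cutClosure A ⊆ C ↔ A ⊆ C :=
  ⟨(subset_cutClosure A).trans, fun h => hC ▸ lowerBounds_mono_set (upperBounds_mono_set h)⟩

theorem mem_iff_forall_upperBounds {C : Set P} (hC : C ∈ DMset P) {x : P} :
    x ∈ C ↔ ∀ z ∈ upperBounds C, x ≤ z :=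
  (Set.ext_iff.1 hC x).symm

theorem val_dmEmb (p : P) : (dmEmb p).1 = cutClosure {p} :=
  (cutClosure_singleton p).symm

theorem isLUB_image_dmEmb (A : DM P) : IsLUB (dmEmb '' A.1) A := by
  refine ⟨?_, fun B hB a ha => hB (Set.mem_image_of_mem _ ha) le_rfl⟩
  rintro _ ⟨p, hp, rfl⟩ q hq
  exact (mem_iff_forall_upperBounds A.2).2 fun z hz => hq.trans (hz hp)

theorem dmEmb_le_dmEmb {p q : P} : dmEmb p ≤ dmEmb q ↔ p ≤ q :=
  Set.Iic_subset_Iic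

theorem isGLB_image_dmEmb {X : Set P} {a : P} (ha : IsGLB X a) :
    IsGLB (dmEmb '' X) (dmEmb a) := by
  refine ⟨?_, fun B hB t ht => ha.2 fun x hx => hB (Set.mem_image_of_mem _ hx) ht⟩
  rintro _ ⟨x, hx, rfl⟩
  exact dmEmb_le_dmEmb.2 (ha.1 hx)

theorem eq_of_preserves_isLUB {α : Type*} [PartialOrder α] {f g : DM P → α}
    (hf : ∀ S s, IsLUB S s → IsLUB (f '' S) (f s))
    (hg : ∀ S s, IsLUB S s → IsLUB (g '' S) (g s))
    (h : ∀ p, f (dmEmb p) = g (dmEmb p)) : f = g := by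
  funext A
  have hA := isLUB_image_dmEmb A
  have himage : f '' (dmEmb '' A.1) = g '' (dmEmb '' A.1) := by
    simp only [Set.image_image, h]
  exact (hf _ _ hA).unique (himage ▸ hg _ _ hA)

variable [Monoid P] {ld rd : P → P → P}

theorem upperBounds_mul_cutClosure (hld : ∀ x y z : P, x * y ≤ z ↔ y ≤ ld x z)
    (A B : Set P) :
    upperBounds (A * cutClosure B) = upperBounds (A * B) := by
  refine (upperBounds_mono_set (Set.mul_subset_mul_left (subset_cutClosure B))).antisymm ?_
  rintro z hz _ ⟨a, ha, y, hy, rfl⟩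
  exact (hld a y z).2 (hy fun b hb => (hld a b z).1 (hz (Set.mul_mem_mul ha hb)))

theorem upperBounds_cutClosure_mul (hrd : ∀ x y z : P, x * y ≤ z ↔ x ≤ rd z y)
    (A B : Set P) :
    upperBounds (cutClosure A * B) = upperBounds (A * B) := by
  refine (upperBounds_mono_set (Set.mul_subset_mul_right (subset_cutClosure A))).antisymm ?_
  rintro z hz _ ⟨x, hx, b, hb, rfl⟩
  exact (hrd x b z).2 (hx fun a ha => (hrd a b z).1 (hz (Set.mul_mem_mul ha hb)))

theorem cutClosure_mul_cutClosure (hld : ∀ x y z : P, x * y ≤ z ↔ y ≤ ld x z)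
    (A B : Set P) :
    cutClosure (A * cutClosure B) = cutClosure (A * B) :=
  congrArg lowerBounds (upperBounds_mul_cutClosure hld A B)

theorem cutClosure_cutClosure_mul (hrd : ∀ x y z : P, x * y ≤ z ↔ x ≤ rd z y)
    (A B : Set P) :
    cutClosure (cutClosure A * B) = cutClosure (A * B) :=
  congrArg lowerBounds (upperBounds_cutClosure_mul hrd A B)

instance : Mul (DM P) :=
  ⟨fun A B => ⟨cutClosure (A.1 * B.1), cutClosure_mem_DMset _⟩⟩

theorem val_mul (A B : DM P) : (A * B).1 = cutClosure (A.1 * B.1) := rfl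

theorem dmEmb_mul_dmEmb (hld : ∀ x y z : P, x * y ≤ z ↔ y ≤ ld x z)
    (hrd : ∀ x y z : P, x * y ≤ z ↔ x ≤ rd z y) (p q : P) :
    dmEmb p * dmEmb q = dmEmb (p * q) := by
  refine Subtype.ext ?_
  rw [val_mul, val_dmEmb, val_dmEmb, val_dmEmb, cutClosure_cutClosure_mul hrd,
    cutClosure_mul_cutClosure hld, Set.singleton_mul_singleton]

protected theorem mul_assoc (hld : ∀ x y z : P, x * y ≤ z ↔ y ≤ ld x z)
    (hrd : ∀ x y z : P, x * y ≤ z ↔ x ≤ rd z y) (A B C : DM P) :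
    A * B * C = A * (B * C) := by
  refine Subtype.ext ?_
  rw [val_mul, val_mul, val_mul, val_mul, cutClosure_cutClosure_mul hrd,
    cutClosure_mul_cutClosure hld, mul_assoc]

theorem dmEmb_one_mul (hrd : ∀ x y z : P, x * y ≤ z ↔ x ≤ rd z y) (A : DM P) :
    dmEmb 1 * A = A := by
  refine Subtype.ext ?_
  rw [val_mul, val_dmEmb, cutClosure_cutClosure_mul hrd, Set.singleton_one, one_mul]
  exact A.2

theorem mul_dmEmb_one (hld : ∀ x y z : P, x * y ≤ z ↔ y ≤ ld x z) (A : DM P) :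
    A * dmEmb 1 = A := by
  refine Subtype.ext ?_
  rw [val_mul, val_dmEmb, cutClosure_mul_cutClosure hld, Set.singleton_one, mul_one]
  exact A.2

def ldiv (ld : P → P → P) (A C : DM P) : DM P :=
  ⟨lowerBounds (Set.image2 ld A.1 (upperBounds C.1)), lowerBounds_mem_DMset _⟩

def rdiv (rd : P → P → P) (C B : DM P) : DM P :=
  ⟨lowerBounds (Set.image2 rd (upperBounds C.1) B.1), lowerBounds_mem_DMset _⟩

theorem mul_le_iff {A B C : DM P} :
    A * B ≤ C ↔ ∀ a ∈ A.1, ∀ b ∈ B.1, ∀ z ∈ upperBounds C.1, a * b ≤ z := by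
  change cutClosure _ ⊆ _ ↔ _
  simp only [cutClosure_subset_iff C.2, Set.mul_subset_iff, mem_iff_forall_upperBounds C.2]

theorem gc_mul_ldiv (hld : ∀ x y z : P, x * y ≤ z ↔ y ≤ ld x z) (A : DM P) :
    GaloisConnection (A * ·) (ldiv ld A) := fun B C => by
  rw [mul_le_iff]
  change _ ↔ B.1 ⊆ lowerBounds _
  simp only [hld, Set.subset_def, mem_lowerBounds, Set.forall_mem_image2]
  exact forall₂_comm

theorem gc_mul_rdiv (hrd : ∀ x y z : P, x * y ≤ z ↔ x ≤ rd z y) (B : DM P) :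
    GaloisConnection (· * B) (rdiv rd · B) := fun A C => by
  rw [mul_le_iff]
  change _ ↔ A.1 ⊆ lowerBounds _
  simp only [hrd, Set.subset_def, mem_lowerBounds, Set.forall_mem_image2]
  exact forall₂_congr fun _ _ => forall₂_comm

theorem isLUB_image_mul_left (hld : ∀ x y z : P, x * y ≤ z ↔ y ≤ ld x z) (A : DM P)
    {S : Set (DM P)} {s : DM P} (hs : IsLUB S s) : IsLUB ((A * ·) '' S) (A * s) :=
  (gc_mul_ldiv hld A).isLUB_l_image hs

theorem isLUB_image_mul_right (hrd : ∀ x y z : P, x * y ≤ z ↔ x ≤ rd z y) (B : DM P)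
    {S : Set (DM P)} {s : DM P} (hs : IsLUB S s) : IsLUB ((· * B) '' S) (s * B) :=
  (gc_mul_rdiv hrd B).isLUB_l_image hs

theorem eq_mul_of_preserves_isLUB (hld : ∀ x y z : P, x * y ≤ z ↔ y ≤ ld x z)
    (hrd : ∀ x y z : P, x * y ≤ z ↔ x ≤ rd z y) (m : DM P → DM P → DM P)
    (hdmEmb : ∀ p q : P, m (dmEmb p) (dmEmb q) = dmEmb (p * q))
    (hleft : ∀ (A : DM P) (S : Set (DM P)) (s : DM P), IsLUB S s → IsLUB (m A '' S) (m A s))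
    (hright : ∀ (B : DM P) (S : Set (DM P)) (s : DM P),
      IsLUB S s → IsLUB ((m · B) '' S) (m s B)) :
    m = (· * ·) := by
  have hdmEmb_left (p : P) : m (dmEmb p) = (dmEmb p * ·) :=
    eq_of_preserves_isLUB (hleft _) (fun _ _ => isLUB_image_mul_left hld _)
      fun q => by rw [hdmEmb, dmEmb_mul_dmEmb hld hrd]
  funext A B
  refine congrFun (eq_of_preserves_isLUB (f := (m · B)) (g := (· * B)) (hright B)
    (fun _ _ => isLUB_image_mul_right hrd B) fun p => ?_) A
  exact congrFun (hdmEmb_left p) B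

theorem dmEmb_mul_le_dmEmb_iff (hld : ∀ x y z : P, x * y ≤ z ↔ y ≤ ld x z)
    (hrd : ∀ x y z : P, x * y ≤ z ↔ x ≤ rd z y) (p q : P) (C : DM P) :
    dmEmb p * C ≤ dmEmb q ↔ C ≤ dmEmb (ld p q) := by
  change q ∈ upperBounds (cutClosure ((dmEmb p).1 * C.1)) ↔ ld p q ∈ upperBounds C.1
  rw [upperBounds_cutClosure, val_dmEmb, upperBounds_cutClosure_mul hrd]
  simp [mem_upperBounds, hld]

theorem mul_dmEmb_le_dmEmb_iff (hld : ∀ x y z : P, x * y ≤ z ↔ y ≤ ld x z)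
    (hrd : ∀ x y z : P, x * y ≤ z ↔ x ≤ rd z y) (p q : P) (C : DM P) :
    C * dmEmb p ≤ dmEmb q ↔ C ≤ dmEmb (rd q p) := by
  change q ∈ upperBounds (cutClosure (C.1 * (dmEmb p).1)) ↔ rd q p ∈ upperBounds C.1
  rw [upperBounds_cutClosure, val_dmEmb, upperBounds_mul_cutClosure hld]
  simp [mem_upperBounds, hrd]

end DM

open DM

/-- The Dedekind-MacNeille completion of a residuated pomonoid `P`
carries a unique structure of a complete residuated lattice whose
multiplication extends that of `P` (i.e. a unique monoid operation with unit
the image of `1`, preserving arbitrary joins in each coordinate, extending the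
multiplication of `P`); moreover the embedding `P ↪ DM P` is an order
embedding preserving products, both residuals, and all existing meets. -/
theorem dedekindMacNeille_residuated_lattice {P : Type*} [PartialOrder P] [Monoid P]
    (ld rd : P → P → P)
    (hld : ∀ x y z : P, x * y ≤ z ↔ y ≤ ld x z)
    (hrd : ∀ x y z : P, x * y ≤ z ↔ x ≤ rd z y) :
    (∃! m : DM P → DM P → DM P,
      (∀ p q : P, m (dmEmb p) (dmEmb q) = dmEmb (p * q)) ∧
      (∀ A B C : DM P, m (m A B) C = m A (m B C)) ∧
      (∀ A : DM P, m (dmEmb 1) A = A ∧ m A (dmEmb 1) = A) ∧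
      (∀ (A : DM P) (S : Set (DM P)) (s : DM P),
        IsLUB S s → IsLUB ((fun x => m A x) '' S) (m A s)) ∧
      (∀ (A : DM P) (S : Set (DM P)) (s : DM P),
        IsLUB S s → IsLUB ((fun x => m x A) '' S) (m s A))) ∧
    -- the embedding is an order embedding
    (∀ p q : P, dmEmb p ≤ dmEmb q ↔ p ≤ q) ∧
    -- for the above multiplication, the embedding preserves both residuals
    (∀ m : DM P → DM P → DM P,
      ((∀ p q : P, m (dmEmb p) (dmEmb q) = dmEmb (p * q)) ∧
       (∀ A B C : DM P, m (m A B) C = m A (m B C)) ∧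
       (∀ A : DM P, m (dmEmb 1) A = A ∧ m A (dmEmb 1) = A) ∧
       (∀ (A : DM P) (S : Set (DM P)) (s : DM P),
         IsLUB S s → IsLUB ((fun x => m A x) '' S) (m A s)) ∧
       (∀ (A : DM P) (S : Set (DM P)) (s : DM P),
         IsLUB S s → IsLUB ((fun x => m x A) '' S) (m s A))) →
      ∀ p q : P, ∀ C : DM P,
        (m (dmEmb p) C ≤ dmEmb q ↔ C ≤ dmEmb (ld p q)) ∧
        (m C (dmEmb p) ≤ dmEmb q ↔ C ≤ dmEmb (rd q p))) ∧
    -- the embedding preserves all existing meets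
    (∀ (X : Set P) (a : P), IsGLB X a → IsGLB (dmEmb '' X) (dmEmb a)) := by
  refine ⟨⟨(· * ·), ⟨dmEmb_mul_dmEmb hld hrd, DM.mul_assoc hld hrd,
      fun A => ⟨dmEmb_one_mul hrd A, mul_dmEmb_one hld A⟩,
      fun A _ _ => isLUB_image_mul_left hld A, fun B _ _ => isLUB_image_mul_right hrd B⟩,
      fun m ⟨hemb, _, _, hleft, hright⟩ =>
        eq_mul_of_preserves_isLUB hld hrd m hemb hleft hright⟩,
    fun _ _ => dmEmb_le_dmEmb, ?_, fun _ _ => isGLB_image_dmEmb⟩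
  rintro m ⟨hemb, -, -, hleft, hright⟩ p q C
  obtain rfl := eq_mul_of_preserves_isLUB hld hrd m hemb hleft hright
  exact ⟨dmEmb_mul_le_dmEmb_iff hld hrd p q C, mul_dmEmb_le_dmEmb_iff hld hrd p q C⟩
end

section
/- The Dedekind-MacNeille completion of an implicative semilattice (a meet-semilattice with top in which meet is residuated) is a Heyting algebra. -/
/-!
A cut is a down-set, and `lowerBounds S` is a cut for every `S`. Hence
`A ∩ B = lowerBounds (upperBounds A ∪ upperBounds B)` is a cut, `lowerBounds univ` is the least
cut and `univ` the greatest. For cuts `A` and `B`, residuation in `P` identifies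
`{x | ∀ a ∈ A, a ⊓ x ∈ B}` with the lower bounds of `{a → u | a ∈ A, u ∈ upperBounds B}`, so it is
a cut, and since cuts are down-sets it is the largest cut `C` with `A ∩ C ⊆ B`.
-/

open Set

section PartialOrder

variable {P : Type*} [PartialOrder P]

theorem lowerBounds_mem_DMset (S : Set P) : lowerBounds S ∈ DMset P :=
  gc_upperBounds_lowerBounds.u_l_u_eq_u S

theorem univ_mem_DMset : (univ : Set P) ∈ DMset P :=
  (subset_univ _).antisymm (subset_lowerBounds_upperBounds _)

theorem DMset.isLowerSet {A : Set P} (hA : A ∈ DMset P) : IsLowerSet A := by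
  rw [← hA]
  exact fun _ _ hyx hx _ hu => hyx.trans (hx hu)

theorem DMset.inter_mem {A B : Set P} (hA : A ∈ DMset P) (hB : B ∈ DMset P) :
    A ∩ B ∈ DMset P := by
  have h : A ∩ B = lowerBounds (upperBounds A ∪ upperBounds B) := by
    rw [lowerBounds_union, hA, hB]
  exact h ▸ lowerBounds_mem_DMset _

theorem lowerBounds_univ_subset_of_mem_DMset {A : Set P} (hA : A ∈ DMset P) :
    lowerBounds univ ⊆ A :=
  hA ▸ lowerBounds_mono_set (subset_univ _)

end PartialOrder

section SemilatticeInf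

variable {P : Type*} [SemilatticeInf P]

theorem setOf_inf_mem_mem_DMset (himp : P → P → P)
    (hres : ∀ a b x : P, a ⊓ x ≤ b ↔ x ≤ himp a b) (A : Set P) {B : Set P}
    (hB : B ∈ DMset P) :
    {x | ∀ a ∈ A, a ⊓ x ∈ B} ∈ DMset P := by
  have h : {x | ∀ a ∈ A, a ⊓ x ∈ B} = lowerBounds (image2 himp A (upperBounds B)) := by
    ext x
    conv_lhs => rw [← hB]
    simp only [mem_ofPred_eq, mem_lowerBounds, forall_mem_image2, ← hres]
  exact h ▸ lowerBounds_mem_DMset _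

theorem inter_subset_iff_subset_setOf_inf_mem {A B C : Set P}
    (hA : IsLowerSet A) (hC : IsLowerSet C) :
    A ∩ C ⊆ B ↔ C ⊆ {x | ∀ a ∈ A, a ⊓ x ∈ B} := by
  constructor
  · exact fun hACB x hx a ha => hACB ⟨hA inf_le_left ha, hC inf_le_right hx⟩
  · rintro hCB x ⟨hxA, hxC⟩
    simpa using hCB hxC x hxA

end SemilatticeInf

theorem dedekindMacNeille_heyting_general {P : Type*} [SemilatticeInf P]
    (himp : P → P → P)
    (hres : ∀ a b x : P, a ⊓ x ≤ b ↔ x ≤ himp a b) :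
    -- meets in the completion are intersections
    (∀ A B : DM P, A.1 ∩ B.1 ∈ DMset P) ∧
    -- top and bottom exist
    (∃ t : DM P, ∀ A : DM P, A ≤ t) ∧
    (∃ bot : DM P, ∀ A : DM P, bot ≤ A) ∧
    -- meet is residuated: a Heyting implication exists
    (∃ h : DM P → DM P → DM P, ∀ A B C : DM P,
      (A.1 ∩ C.1 ⊆ B.1) ↔ C ≤ h A B) := by
  refine ⟨fun A B => DMset.inter_mem A.2 B.2, ⟨⟨univ, univ_mem_DMset⟩, fun A => subset_univ A.1⟩,
    ⟨⟨lowerBounds univ, lowerBounds_mem_DMset _⟩,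
      fun A => lowerBounds_univ_subset_of_mem_DMset A.2⟩, ?_⟩
  refine ⟨fun A B => ⟨{x | ∀ a ∈ A.1, a ⊓ x ∈ B.1}, setOf_inf_mem_mem_DMset himp hres A.1 B.2⟩, ?_⟩
  exact fun A B C =>
    inter_subset_iff_subset_setOf_inf_mem (DMset.isLowerSet A.2) (DMset.isLowerSet C.2)

/-- The Dedekind-MacNeille completion of an implicative
semilattice (a meet-semilattice with top in which meet is residuated) is a
Heyting algebra: it has a top and a bottom element, binary meets are given by
intersection, and meet is residuated. -/
theorem dedekindMacNeille_heyting {P : Type*} [SemilatticeInf P] [OrderTop P]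
    (himp : P → P → P)
    (hres : ∀ a b x : P, a ⊓ x ≤ b ↔ x ≤ himp a b) :
    -- meets in the completion are intersections
    (∀ A B : DM P, A.1 ∩ B.1 ∈ DMset P) ∧
    -- top and bottom exist
    (∃ t : DM P, ∀ A : DM P, A ≤ t) ∧
    (∃ bot : DM P, ∀ A : DM P, bot ≤ A) ∧
    -- meet is residuated: a Heyting implication exists
    (∃ h : DM P → DM P → DM P, ∀ A B C : DM P,
      (A.1 ∩ C.1 ⊆ B.1) ↔ C ≤ h A B) :=
  dedekindMacNeille_heyting_general himp hres
end

section
/- Let P be a residuated partially ordered monoid and γ a nucleus on P. The image P_γ (with its induced residuated pomonoid structure, where multiplication is x ∘ y = γ(xy)) is an involutive residuated partially ordered monoid (i.e., has a cyclic dualizing element) if and only if there exists a cyclic element d of P such that γ = γ_d, where γ_d(x) = (x ⇝ d) ⇝ d. -/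
/-!
If `d` is a fixed point of the nucleus `γ`, then `x ⇝ d = γ x ⇝ d` for every `x`, because
`γ x * (x ⇝ d) ≤ γ (x * (x ⇝ d)) ≤ γ d = d`. Hence a cyclic dualizing element `d` of `P_γ`
is already cyclic in `P`, and `γ x = (γ x ⇝ d) ⇝ d = (x ⇝ d) ⇝ d`. Conversely, if `γ = γ_d`
then `d` is fixed by `γ`, since `(d ⇝ d) ⇝ d ≤ 1 ⇝ d = d`, and `(x ⇝ d) ⇝ d = x` on
`P_γ` is the very definition of its elements.
-/

section Residuated

variable {P : Type*} [PartialOrder P] [Monoid P] {ld rd : P → P → P}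

theorem mul_le_mul_left_of_residuated (hld : ∀ x y z : P, x * y ≤ z ↔ y ≤ ld x z)
    (c : P) {a b : P} (h : a ≤ b) : c * a ≤ c * b :=
  (hld c a (c * b)).mpr (h.trans ((hld c b (c * b)).mp le_rfl))

theorem mul_le_mul_right_of_residuated (hrd : ∀ x y z : P, x * y ≤ z ↔ x ≤ rd z y)
    (c : P) {a b : P} (h : a ≤ b) : a * c ≤ b * c :=
  (hrd a c (b * c)).mpr (h.trans ((hrd b c (b * c)).mp le_rfl))

theorem ld_le_ld_of_le (hld : ∀ x y z : P, x * y ≤ z ↔ y ≤ ld x z)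
    (hrd : ∀ x y z : P, x * y ≤ z ↔ x ≤ rd z y) (e : P) {a b : P} (h : a ≤ b) :
    ld b e ≤ ld a e :=
  (hld a (ld b e) e).mp
    ((mul_le_mul_right_of_residuated hrd _ h).trans ((hld b (ld b e) e).mpr le_rfl))

theorem rd_le_rd_of_le (hld : ∀ x y z : P, x * y ≤ z ↔ y ≤ ld x z)
    (hrd : ∀ x y z : P, x * y ≤ z ↔ x ≤ rd z y) (e : P) {a b : P} (h : a ≤ b) :
    rd e b ≤ rd e a :=
  (hrd (rd e b) a e).mp
    ((mul_le_mul_left_of_residuated hld _ h).trans ((hrd (rd e b) b e).mpr le_rfl))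

theorem ld_one_left (hld : ∀ x y z : P, x * y ≤ z ↔ y ≤ ld x z) (d : P) : ld 1 d = d :=
  eq_of_forall_le_iff fun y => by rw [← hld, one_mul]

theorem ld_ld_self_le (hld : ∀ x y z : P, x * y ≤ z ↔ y ≤ ld x z)
    (hrd : ∀ x y z : P, x * y ≤ z ↔ x ≤ rd z y) (d : P) : ld (ld d d) d ≤ d := by
  have one_le : (1 : P) ≤ ld d d := (hld d 1 d).mp (mul_one d).le
  calc ld (ld d d) d ≤ ld 1 d := ld_le_ld_of_le hld hrd d one_le
    _ = d := ld_one_left hld d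

variable {γ : P → P}

theorem ld_nucleus_eq_of_fixed (hld : ∀ x y z : P, x * y ≤ z ↔ y ≤ ld x z)
    (hrd : ∀ x y z : P, x * y ≤ z ↔ x ≤ rd z y) (hmono : Monotone γ)
    (hle : ∀ x : P, x ≤ γ x) (hnuc : ∀ a b : P, γ a * γ b ≤ γ (a * b))
    {d : P} (hd : γ d = d) (x : P) : ld (γ x) d = ld x d := by
  refine le_antisymm (ld_le_ld_of_le hld hrd d (hle x)) ((hld (γ x) (ld x d) d).mp ?_)
  calc γ x * ld x d ≤ γ x * γ (ld x d) := mul_le_mul_left_of_residuated hld _ (hle _)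
    _ ≤ γ (x * ld x d) := hnuc x (ld x d)
    _ ≤ γ d := hmono ((hld x (ld x d) d).mpr le_rfl)
    _ = d := hd

theorem rd_nucleus_eq_of_fixed (hld : ∀ x y z : P, x * y ≤ z ↔ y ≤ ld x z)
    (hrd : ∀ x y z : P, x * y ≤ z ↔ x ≤ rd z y) (hmono : Monotone γ)
    (hle : ∀ x : P, x ≤ γ x) (hnuc : ∀ a b : P, γ a * γ b ≤ γ (a * b))
    {d : P} (hd : γ d = d) (x : P) : rd d (γ x) = rd d x := by
  refine le_antisymm (rd_le_rd_of_le hld hrd d (hle x)) ((hrd (rd d x) (γ x) d).mp ?_)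
  calc rd d x * γ x ≤ γ (rd d x) * γ x := mul_le_mul_right_of_residuated hrd _ (hle _)
    _ ≤ γ (rd d x * x) := hnuc _ _
    _ ≤ γ d := hmono ((hrd (rd d x) x d).mpr le_rfl)
    _ = d := hd

end Residuated

/-- Let `γ` be a nucleus on a residuated pomonoid `P`.  The image
`P_γ = {x : γ x = x}` (with its induced residuated pomonoid structure, where
the residuals are inherited from `P`) is an involutive residuated pomonoid —
i.e. it possesses a cyclic dualizing element — if and only if there is a
cyclic element `d` of `P` with `γ = γ_d`, where `γ_d x = (x ⇝ d) ⇝ d` and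
`x ⇝ d = ld x d`. -/
theorem nucleus_image_involutive_iff {P : Type*} [PartialOrder P] [Monoid P]
    (ld rd : P → P → P)
    (hld : ∀ x y z : P, x * y ≤ z ↔ y ≤ ld x z)
    (hrd : ∀ x y z : P, x * y ≤ z ↔ x ≤ rd z y)
    (γ : P → P) (hmono : Monotone γ) (hle : ∀ x : P, x ≤ γ x)
    (hidem : ∀ x : P, γ (γ x) = γ x)
    (hnuc : ∀ a b : P, γ a * γ b ≤ γ (a * b)) :
    -- P_γ has a cyclic dualizing element
    (∃ d : P, γ d = d ∧
        (∀ x : P, γ x = x → ld x d = rd d x) ∧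
        (∀ x : P, γ x = x → ld (ld x d) d = x))
    ↔
    -- γ = γ_d for some cyclic element d of P
    (∃ d : P, (∀ x : P, rd d x = ld x d) ∧ γ = fun x => ld (ld x d) d) := by
  constructor
  · rintro ⟨d, hd, hcyc, hdual⟩
    have hld_γ := ld_nucleus_eq_of_fixed hld hrd hmono hle hnuc hd
    have hrd_γ := rd_nucleus_eq_of_fixed hld hrd hmono hle hnuc hd
    refine ⟨d, fun x => ?_, funext fun x => ?_⟩
    · rw [← hrd_γ x, ← hld_γ x, hcyc (γ x) (hidem x)]
    · rw [← hld_γ x, hdual (γ x) (hidem x)]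
  · rintro ⟨d, hcyc, rfl⟩
    exact ⟨d, le_antisymm (ld_ld_self_le hld hrd d) (hle d), fun x _ => (hcyc x).symm,
      fun x hx => hx⟩
end

section
/- An involutive residuated lattice ⟨L, ∧, ∨, ·, \, /, 1, d⟩ is term equivalent to an algebra ⟨L, ∧, ∨, ·, 1, '⟩ where ⟨L, ·, 1⟩ is a monoid, ⟨L, ∧, ∨, '⟩ is an involutive lattice (x'' = x and x ≤ y implies y' ≤ x'), and for all x, y, z: xy ≤ z ⟺ y ≤ (z'x)' ⟺ x ≤ (yz')'. -/
/-!
Write `x' = x\d`. Cyclicity and `x'' = x` give `z = z'\d = d/z'`, so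
`xy ≤ z ⟺ z'xy ≤ d ⟺ y ≤ (z'x)'` and `xy ≤ z ⟺ xyz' ≤ d ⟺ x ≤ (yz')'`; order reversal of `'`
follows from `x ≤ y ⟹ xy' ≤ yy' ≤ d`. Conversely, `d = 1'`, `x\z = (z'x)'` and `z/y = (yz')'`
are residuals by the two equivalences, and both `x\d` and `d/x` reduce to `x'`.
-/

section InvolutiveResiduation

variable {L : Type*} [Monoid L] [Preorder L] {ld rd : L → L → L} {d : L}

theorem mul_le_iff_le_ld_ld_mul (hld : ∀ x y z : L, x * y ≤ z ↔ y ≤ ld x z)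
    (hdd : ∀ x : L, ld (ld x d) d = x) (x y z : L) :
    x * y ≤ z ↔ y ≤ ld (ld z d * x) d :=
  calc x * y ≤ z ↔ x * y ≤ ld (ld z d) d := by rw [hdd]
    _ ↔ ld z d * (x * y) ≤ d := (hld _ _ _).symm
    _ ↔ ld z d * x * y ≤ d := by rw [mul_assoc]
    _ ↔ y ≤ ld (ld z d * x) d := hld _ _ _

theorem mul_le_iff_le_ld_mul_ld (hrd : ∀ x y z : L, x * y ≤ z ↔ x ≤ rd z y)
    (hcyc : ∀ x : L, rd d x = ld x d) (hdd : ∀ x : L, ld (ld x d) d = x) (x y z : L) :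
    x * y ≤ z ↔ x ≤ ld (y * ld z d) d :=
  calc x * y ≤ z ↔ x * y ≤ rd d (ld z d) := by rw [hcyc, hdd]
    _ ↔ x * y * ld z d ≤ d := (hrd _ _ _).symm
    _ ↔ x * (y * ld z d) ≤ d := by rw [mul_assoc]
    _ ↔ x ≤ rd d (y * ld z d) := hrd _ _ _
    _ ↔ x ≤ ld (y * ld z d) d := by rw [hcyc]

theorem antitone_ld_left (hld : ∀ x y z : L, x * y ≤ z ↔ y ≤ ld x z)
    (hrd : ∀ x y z : L, x * y ≤ z ↔ x ≤ rd z y) : Antitone (ld · d) := by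
  intro x y hxy
  have hmul : x * ld y d ≤ y * ld y d :=
    GaloisConnection.monotone_l (fun a b => hrd a (ld y d) b) hxy
  exact (hld x _ d).mp (hmul.trans ((hld y _ d).mpr le_rfl))

end InvolutiveResiduation

/-- An involutive residuated lattice `⟨L,∧,∨,·,\,/,1,d⟩` is term
equivalent to an algebra `⟨L,∧,∨,·,1,'⟩` where `⟨L,·,1⟩` is a monoid,
`⟨L,∧,∨,'⟩` is an involutive lattice (`x'' = x` and `'` is order-reversing),
and `xy ≤ z ⟺ y ≤ (z'x)' ⟺ x ≤ (yz')'`.  Over a common lattice-ordered monoid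
reduct, the unary operation `'` comes from an involutive residuated lattice
structure iff it satisfies the latter axioms. -/
theorem involutive_residuated_lattice_term_equivalence
    {L : Type*} [Lattice L] [Monoid L] (inv : L → L) :
    (∃ (ld rd : L → L → L) (d : L),
        (∀ x y z : L, x * y ≤ z ↔ y ≤ ld x z) ∧
        (∀ x y z : L, x * y ≤ z ↔ x ≤ rd z y) ∧
        (∀ x : L, rd d x = ld x d) ∧
        (∀ x : L, ld (ld x d) d = x) ∧
        (∀ x : L, inv x = ld x d))
    ↔
    ((∀ x : L, inv (inv x) = x) ∧
     (∀ x y : L, x ≤ y → inv y ≤ inv x) ∧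
     (∀ x y z : L,
        (x * y ≤ z ↔ y ≤ inv (inv z * x)) ∧
        (x * y ≤ z ↔ x ≤ inv (y * inv z)))) := by
  constructor
  · rintro ⟨ld, rd, d, hld, hrd, hcyc, hdd, hinv⟩
    obtain rfl : inv = (ld · d) := funext hinv
    exact ⟨hdd, antitone_ld_left hld hrd, fun x y z =>
      ⟨mul_le_iff_le_ld_ld_mul hld hdd x y z, mul_le_iff_le_ld_mul_ld hrd hcyc hdd x y z⟩⟩
  · rintro ⟨hii, -, hres⟩
    have hd : inv (inv 1) = 1 := hii 1
    refine ⟨fun x z => inv (inv z * x), fun z y => inv (y * inv z), inv 1,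
      fun x y z => (hres x y z).1, fun x y z => (hres x y z).2, fun x => ?_, fun x => ?_,
      fun x => ?_⟩ <;> simp only [hd, hii, mul_one, one_mul]
end

section
/- Let P be a residuated partially ordered monoid and L a join-completion of P which is a residuated lattice whose multiplication extends that of P. If d ∈ P is a cyclic dualizing element of P, then d is a cyclic element of L, and the nucleus image L_{γ_d} is a join- and meet-completion of P_{γ_d} = P; hence L_{γ_d} is the Dedekind-MacNeille completion of P. -/
/-! Both residuals turn joins in their denominator into meets, so on a join-dense `P` they are
determined by their values on `P`: this makes `d` cyclic in `L`. An element `a` with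
`(a ⇝ d) ⇝ d = a` is then the meet of the elements `y ⇝ d` of `P`, where `y` ranges over a
subset of `P` joining to `a ⇝ d`. -/

theorem ld_sSup_eq_iInf {L : Type*} [CompleteLattice L] [Monoid L] {ld rd : L → L → L}
    (hld : ∀ x y z : L, x * y ≤ z ↔ y ≤ ld x z) (hrd : ∀ x y z : L, x * y ≤ z ↔ x ≤ rd z y)
    (S : Set L) (z : L) : ld (sSup S) z = ⨅ s ∈ S, ld s z :=
  eq_of_forall_le_iff fun t => by simp only [le_iInf₂_iff, ← hld, hrd, sSup_le_iff]

theorem rd_sSup_eq_iInf {L : Type*} [CompleteLattice L] [Monoid L] {ld rd : L → L → L}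
    (hld : ∀ x y z : L, x * y ≤ z ↔ y ≤ ld x z) (hrd : ∀ x y z : L, x * y ≤ z ↔ x ≤ rd z y)
    (S : Set L) (z : L) : rd z (sSup S) = ⨅ s ∈ S, rd z s :=
  eq_of_forall_le_iff fun t => by simp only [le_iInf₂_iff, ← hrd, hld, sSup_le_iff]

theorem rd_eq_ld_of_joinDense {L : Type*} [CompleteLattice L] [Monoid L] {ld rd : L → L → L}
    (hld : ∀ x y z : L, x * y ≤ z ↔ y ≤ ld x z) (hrd : ∀ x y z : L, x * y ≤ z ↔ x ≤ rd z y)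
    {P : Set L} (hdense : ∀ l : L, ∃ X ⊆ P, sSup X = l)
    {d : L} (hcyc : ∀ x ∈ P, rd d x = ld x d) (x : L) : rd d x = ld x d := by
  obtain ⟨X, hXP, rfl⟩ := hdense x
  rw [ld_sSup_eq_iInf hld hrd, rd_sSup_eq_iInf hld hrd]
  exact biInf_congr fun s hs => hcyc s (hXP hs)

theorem exists_subset_sInf_eq_of_ld_ld_eq {L : Type*} [CompleteLattice L] [Monoid L]
    {ld rd : L → L → L}
    (hld : ∀ x y z : L, x * y ≤ z ↔ y ≤ ld x z) (hrd : ∀ x y z : L, x * y ≤ z ↔ x ≤ rd z y)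
    {P : Set L} (hdense : ∀ l : L, ∃ X ⊆ P, sSup X = l)
    {d : L} (hres : ∀ y ∈ P, ld y d ∈ P) {a : L} (ha : ld (ld a d) d = a) :
    ∃ X ⊆ P, sInf X = a := by
  obtain ⟨Y, hYP, hY⟩ := hdense (ld a d)
  refine ⟨(ld · d) '' Y, Set.image_subset_iff.2 fun y hy => hres y (hYP hy), ?_⟩
  rw [sInf_image, ← ld_sSup_eq_iInf hld hrd, hY, ha]

theorem nucleus_image_is_DM_completion_general {L : Type*} [CompleteLattice L] [Monoid L]
    (ld rd : L → L → L)
    (hld : ∀ x y z : L, x * y ≤ z ↔ y ≤ ld x z)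
    (hrd : ∀ x y z : L, x * y ≤ z ↔ x ≤ rd z y)
    (P : Set L)
    (hPres : ∀ x ∈ P, ∀ y ∈ P, ld x y ∈ P ∧ rd y x ∈ P)
    (hdense : ∀ l : L, ∃ X ⊆ P, sSup X = l)
    (d : L) (hd : d ∈ P)
    (hcycP : ∀ x ∈ P, rd d x = ld x d)
    (hdualP : ∀ x ∈ P, ld (ld x d) d = x) :
    -- d is a cyclic element of L
    (∀ x : L, rd d x = ld x d) ∧
    -- P consists of fixed points of γ_d
    (∀ x ∈ P, ld (ld x d) d = x) ∧
    -- every element of L_{γ_d} is a join, within L_{γ_d}, of elements of P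
    (∀ a : L, ld (ld a d) d = a →
      ∃ X ⊆ P, (∀ x ∈ X, x ≤ a) ∧
        ∀ b : L, ld (ld b d) d = b → (∀ x ∈ X, x ≤ b) → a ≤ b) ∧
    -- every element of L_{γ_d} is a meet, within L_{γ_d}, of elements of P
    (∀ a : L, ld (ld a d) d = a →
      ∃ X ⊆ P, (∀ x ∈ X, a ≤ x) ∧
        ∀ b : L, ld (ld b d) d = b → (∀ x ∈ X, b ≤ x) → b ≤ a) := by
  refine ⟨rd_eq_ld_of_joinDense hld hrd hdense hcycP, hdualP, fun a _ => ?_, fun a ha => ?_⟩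
  · obtain ⟨X, hXP, rfl⟩ := hdense a
    exact ⟨X, hXP, fun _ => le_sSup, fun _ _ => sSup_le⟩
  · obtain ⟨X, hXP, rfl⟩ :=
      exists_subset_sInf_eq_of_ld_ld_eq hld hrd hdense (fun y hy => (hPres y hy d hd).1) ha
    exact ⟨X, hXP, fun _ => sInf_le, fun _ _ => le_sInf⟩

/-- Let `P` be a residuated pomonoid, join-densely embedded in a
complete residuated lattice `L` whose multiplication and residuals extend
those of `P`.  If `d ∈ P` is a cyclic dualizing element of `P`, then `d` is a
cyclic element of `L`, and the nucleus image `L_{γ_d} = {x : (x⇝d)⇝d = x}`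
(which contains `P = P_{γ_d}`) is both a join- and a meet-completion of `P`;
hence it is the Dedekind-MacNeille completion of `P`. -/
theorem nucleus_image_is_DM_completion {L : Type*} [CompleteLattice L] [Monoid L]
    (ld rd : L → L → L)
    (hld : ∀ x y z : L, x * y ≤ z ↔ y ≤ ld x z)
    (hrd : ∀ x y z : L, x * y ≤ z ↔ x ≤ rd z y)
    (P : Set L) (h1 : (1 : L) ∈ P)
    (hPmul : ∀ x ∈ P, ∀ y ∈ P, x * y ∈ P)
    (hPres : ∀ x ∈ P, ∀ y ∈ P, ld x y ∈ P ∧ rd y x ∈ P)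
    (hdense : ∀ l : L, ∃ X ⊆ P, sSup X = l)
    (d : L) (hd : d ∈ P)
    (hcycP : ∀ x ∈ P, rd d x = ld x d)
    (hdualP : ∀ x ∈ P, ld (ld x d) d = x) :
    -- d is a cyclic element of L
    (∀ x : L, rd d x = ld x d) ∧
    -- P consists of fixed points of γ_d
    (∀ x ∈ P, ld (ld x d) d = x) ∧
    -- every element of L_{γ_d} is a join, within L_{γ_d}, of elements of P
    (∀ a : L, ld (ld a d) d = a →
      ∃ X ⊆ P, (∀ x ∈ X, x ≤ a) ∧
        ∀ b : L, ld (ld b d) d = b → (∀ x ∈ X, x ≤ b) → a ≤ b) ∧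
    -- every element of L_{γ_d} is a meet, within L_{γ_d}, of elements of P
    (∀ a : L, ld (ld a d) d = a →
      ∃ X ⊆ P, (∀ x ∈ X, a ≤ x) ∧
        ∀ b : L, ld (ld b d) d = b → (∀ x ∈ X, b ≤ x) → b ≤ a) :=
  nucleus_image_is_DM_completion_general ld rd hld hrd P hPres hdense d hd hcycP hdualP
end

section
/- If P is an Archimedean partially ordered group (for all x, y: if xⁿ ≤ y for all n ≥ 1 then x ≤ 1), then the Dedekind-MacNeille completion of P with its top and bottom elements removed is a (conditionally complete) partially ordered group: every element of it is invertible. -/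
/-!
The inverse of a cut `A` is the cut `(upperBounds A)⁻¹`. The product `A * (upperBounds A)⁻¹`
lies below `1`, and the Archimedean property shows that `1` is its least upper bound: if `t` bounds
it from above, then `t * upperBounds A ⊆ upperBounds A`, so `a ≤ tⁿ * u` for fixed `a ∈ A`,
`u ∈ upperBounds A` and every `n`, which forces `t⁻¹ ≤ 1`. Since `(upperBounds A)⁻¹` is again a
cut whose upper bounds are `A⁻¹`, the same argument applied to it gives the product in the other
order.
-/

open Pointwise

section

variable {G : Type*} [Group G] [PartialOrder G] [MulLeftMono G] [MulRightMono G]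

theorem upperBounds_inv (S : Set G) : upperBounds S⁻¹ = (lowerBounds S)⁻¹ := by
  ext t
  simp only [Set.mem_inv, mem_upperBounds, mem_lowerBounds]
  exact ⟨fun h s hs => inv_le'.mp (h s⁻¹ (by rwa [inv_inv])),
    fun h s hs => inv_inv s ▸ inv_le'.mpr (h s⁻¹ hs)⟩

theorem lowerBounds_inv (S : Set G) : lowerBounds S⁻¹ = (upperBounds S)⁻¹ := by
  ext t
  simp only [Set.mem_inv, mem_upperBounds, mem_lowerBounds]
  exact ⟨fun h s hs => le_inv'.mp (h s⁻¹ (by rwa [inv_inv])),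
    fun h s hs => inv_inv s ▸ le_inv'.mpr (h s⁻¹ hs)⟩

theorem upperBounds_inv_upperBounds {A : Set G} (hA : lowerBounds (upperBounds A) = A) :
    upperBounds (upperBounds A)⁻¹ = A⁻¹ := by
  rw [upperBounds_inv, hA]

theorem one_le_of_forall_le_pow_mul
    (harch : ∀ x y : G, (∀ n : ℕ, 1 ≤ n → x ^ n ≤ y) → x ≤ 1)
    {a b t : G} (h : ∀ n : ℕ, a ≤ t ^ n * b) : 1 ≤ t := by
  refine inv_le_one'.mp (harch t⁻¹ (b * a⁻¹) fun n _ => ?_)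
  calc t⁻¹ ^ n = (t ^ n)⁻¹ := inv_pow t n
    _ ≤ (a * b⁻¹)⁻¹ := inv_le_inv_iff.mpr (mul_inv_le_iff_le_mul.mpr (h n))
    _ = b * a⁻¹ := by group

theorem upperBounds_mul_inv_upperBounds
    (harch : ∀ x y : G, (∀ n : ℕ, 1 ≤ n → x ^ n ≤ y) → x ≤ 1)
    {A : Set G} (hne : A.Nonempty) (hbdd : (upperBounds A).Nonempty) :
    upperBounds (A * (upperBounds A)⁻¹) = upperBounds {1} := by
  obtain ⟨a₀, ha₀⟩ := hne
  obtain ⟨u₀, hu₀⟩ := hbdd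
  rw [upperBounds_singleton]
  apply Set.Subset.antisymm
  · intro t ht
    have hstep : ∀ u ∈ upperBounds A, t * u ∈ upperBounds A := fun u hu a ha =>
      mul_inv_le_iff_le_mul.mp (ht (Set.mul_mem_mul ha (Set.inv_mem_inv.mpr hu)))
    have hpow : ∀ n : ℕ, t ^ n * u₀ ∈ upperBounds A := by
      intro n
      induction n with
      | zero => simpa using hu₀
      | succ n ih => simpa only [pow_succ', mul_assoc] using hstep _ ih
    exact one_le_of_forall_le_pow_mul harch fun n => hpow n ha₀
  · rintro t (ht : 1 ≤ t) _ ⟨a, ha, u, hu : u⁻¹ ∈ upperBounds A, rfl⟩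
    exact (le_inv_iff_mul_le_one_right.mp (hu ha)).trans ht

end

/-- If `P` is an Archimedean partially ordered group, then the
Dedekind-MacNeille completion of `P` with top and bottom removed — i.e. the
cuts `A = lowerBounds (upperBounds A)` that are nonempty and bounded above —
is a partially ordered group: every such cut `A` is invertible for the induced
multiplication `A ∘ B = γ(A·B)` (where `γ S = lowerBounds (upperBounds S)`),
with unit the cut `γ {1}`. -/
theorem archimedean_DM_completion_group {G : Type*} [Group G] [PartialOrder G]
    [CovariantClass G G (· * ·) (· ≤ ·)]
    [CovariantClass G G (Function.swap (· * ·)) (· ≤ ·)]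
    (harch : ∀ x y : G, (∀ n : ℕ, 1 ≤ n → x ^ n ≤ y) → x ≤ 1)
    (A : Set G) (hA : lowerBounds (upperBounds A) = A)
    (hne : A.Nonempty) (hbdd : (upperBounds A).Nonempty) :
    ∃ B : Set G,
      lowerBounds (upperBounds B) = B ∧ B.Nonempty ∧ (upperBounds B).Nonempty ∧
      lowerBounds (upperBounds (A * B)) = lowerBounds (upperBounds ({1} : Set G)) ∧
      lowerBounds (upperBounds (B * A)) = lowerBounds (upperBounds ({1} : Set G)) := by
  have hubB : upperBounds (upperBounds A)⁻¹ = A⁻¹ := upperBounds_inv_upperBounds hA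
  have hBbdd : (upperBounds (upperBounds A)⁻¹).Nonempty := hubB ▸ hne.inv
  have hBA := upperBounds_mul_inv_upperBounds harch hbdd.inv hBbdd
  rw [hubB, inv_inv] at hBA
  exact ⟨_, by rw [hubB, lowerBounds_inv], hbdd.inv, hBbdd,
    by rw [upperBounds_mul_inv_upperBounds harch hne hbdd], by rw [hBA]⟩
end

section
/- A class of algebras is a variety of partially ordered groups inside involutive residuated lattices: an involutive residuated lattice ⟨L, ∧, ∨, ·, \, /, 1, d⟩ satisfies d = 1 and x\x = 1 for all x if and only if its monoid reduct is a group (every element has a two-sided inverse) with x\y = x⁻¹y and y/x = yx⁻¹; in particular, from d = 1 and x\x = 1 one derives a·(a\1) = 1 = (1/a)·a for all a. -/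
/-!
Write `x\y` for `ld x y`. Since `(xy)\z = y\(x\z)`, the involution `x ↦ x\1` turns `x·(x\1)`
into `(x\1)\(x\1) = 1` and `(x\1)·x` into `x\((x\1)\1) = x\x = 1`, so `x\1` is a two-sided
inverse of `x`. Division by a unit `u` is then multiplication by `u⁻¹`, because `u⁻¹ * ·` is
a right adjoint of `u * ·` and adjoints are unique.
-/

section ResiduatedMonoid

variable {L : Type*} [Monoid L] [PartialOrder L] {ld rd : L → L → L}

theorem ld_mul (hld : ∀ x, GaloisConnection (x * ·) (ld x)) (x y z : L) :
    ld (x * y) z = ld y (ld x z) :=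
  (hld (x * y)).u_unique ((hld y).compose (hld x)) fun w => mul_assoc x y w

theorem ld_units (hld : ∀ x, GaloisConnection (x * ·) (ld x)) (u : Lˣ) (y : L) :
    ld u y = ↑u⁻¹ * y := by
  refine (hld u).u_unique (l' := (u * ·)) (u' := (↑u⁻¹ * ·))
    (fun w z => ⟨fun h => ?_, fun h => ?_⟩) fun _ => rfl
  · simpa using (hld ↑u⁻¹).monotone_l h
  · simpa using (hld u).monotone_l h

theorem rd_units (hrd : ∀ y, GaloisConnection (· * y) (rd · y)) (u : Lˣ) (y : L) :
    rd y u = y * ↑u⁻¹ := by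
  refine (hrd u).u_unique (l' := (· * u)) (u' := (· * ↑u⁻¹))
    (fun w z => ⟨fun h => ?_, fun h => ?_⟩) fun _ => rfl
  · simpa [mul_assoc] using (hrd ↑u⁻¹).monotone_l h
  · simpa [mul_assoc] using (hrd u).monotone_l h

variable (hld : ∀ x, GaloisConnection (x * ·) (ld x)) (hself : ∀ x, ld x x = 1)
  (hinvol : ∀ x, ld (ld x 1) 1 = x)
include hld hself hinvol

theorem mul_ld_one (x : L) : x * ld x 1 = 1 := by
  have h : ld (x * ld x 1) 1 = 1 := by rw [ld_mul hld, hself]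
  rw [← hinvol (x * ld x 1), h, hself]

theorem ld_one_mul (x : L) : ld x 1 * x = 1 := by
  have h : ld (ld x 1 * x) 1 = 1 := by rw [ld_mul hld, hinvol, hself]
  rw [← hinvol (ld x 1 * x), h, hself]

def unitOfLdOne (x : L) : Lˣ :=
  ⟨x, ld x 1, mul_ld_one hld hself hinvol x, ld_one_mul hld hself hinvol x⟩

end ResiduatedMonoid

theorem pogroups_as_involutive_residuated_lattices_general {L : Type*} [Lattice L] [Monoid L]
    (ld rd : L → L → L)
    (hld : ∀ x y z : L, x * y ≤ z ↔ y ≤ ld x z)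
    (hrd : ∀ x y z : L, x * y ≤ z ↔ x ≤ rd z y)
    (d : L)
    (hdual : ∀ x : L, ld (ld x d) d = x) :
    ((d = 1 ∧ ∀ x : L, ld x x = 1) ↔
      (d = 1 ∧ ∃ inv : L → L, ∀ a : L,
        a * inv a = 1 ∧ inv a * a = 1 ∧
        (∀ y : L, ld a y = inv a * y) ∧ (∀ y : L, rd y a = y * inv a))) ∧
    ((d = 1 ∧ ∀ x : L, ld x x = 1) →
      ∀ a : L, a * ld a 1 = 1 ∧ rd 1 a * a = 1) := by
  have hrd' : ∀ y, GaloisConnection (· * y) (rd · y) := fun y w z => hrd w y z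
  have group_of : (d = 1 ∧ ∀ x : L, ld x x = 1) → ∀ a : L,
      a * ld a 1 = 1 ∧ ld a 1 * a = 1 ∧
        (∀ y, ld a y = ld a 1 * y) ∧ (∀ y, rd y a = y * ld a 1) := by
    rintro ⟨rfl, hself⟩ a
    let u := unitOfLdOne hld hself hdual a
    exact ⟨u.val_inv, u.inv_val, ld_units hld u, rd_units hrd' u⟩
  refine ⟨⟨fun h => ⟨h.1, _, group_of h⟩, ?_⟩, fun h a => ?_⟩
  · rintro ⟨hd, inv, hinv⟩
    exact ⟨hd, fun x => by rw [(hinv x).2.2.1, (hinv x).2.1]⟩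
  · obtain ⟨hmul, hinv, -, hrd_eq⟩ := group_of h a
    exact ⟨hmul, by rw [hrd_eq, one_mul, hinv]⟩

/-- Partially ordered groups as a variety inside involutive
residuated lattices: an involutive residuated lattice `⟨L,∧,∨,·,\,/,1,d⟩`
satisfies `d = 1` and `x\x = 1` (for all `x`) if and only if it arises from a
partially ordered group, i.e. `d = 1` and the monoid reduct is a group with
`x\y = x⁻¹y` and `y/x = yx⁻¹`; in particular, from `d = 1` and `x\x = 1` one
derives `a·(a\1) = 1 = (1/a)·a` for all `a`. -/
theorem pogroups_as_involutive_residuated_lattices {L : Type*} [Lattice L] [Monoid L]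
    (ld rd : L → L → L)
    (hld : ∀ x y z : L, x * y ≤ z ↔ y ≤ ld x z)
    (hrd : ∀ x y z : L, x * y ≤ z ↔ x ≤ rd z y)
    (d : L)
    (hcyc : ∀ x : L, rd d x = ld x d)
    (hdual : ∀ x : L, ld (ld x d) d = x) :
    ((d = 1 ∧ ∀ x : L, ld x x = 1) ↔
      (d = 1 ∧ ∃ inv : L → L, ∀ a : L,
        a * inv a = 1 ∧ inv a * a = 1 ∧
        (∀ y : L, ld a y = inv a * y) ∧ (∀ y : L, rd y a = y * inv a))) ∧
    ((d = 1 ∧ ∀ x : L, ld x x = 1) →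
      ∀ a : L, a * ld a 1 = 1 ∧ rd 1 a * a = 1) :=
  pogroups_as_involutive_residuated_lattices_general ld rd hld hrd d hdual
end

section
/- Let P be an integral partially ordered monoid and D a nonempty subset of the order-ideal residuated lattice 𝒪(P) consisting of elements such that for all a ∈ P (identified with principal ideals) and b ∈ D, the residuals a\b and b/a (computed in 𝒪(P)) lie in D. Then the closure system D̄ = {⋀X : X ⊆ D} generated by D in 𝒪(P) is a nucleus-system of 𝒪(P), and hence is itself a residuated lattice under x ∘ y = γ_{D̄}(x·y). -/
open Pointwise

/-!
Every member of `D̄` is an intersection `⋂ Cᵢ` of members of `D`, and `X \ ⋂ Cᵢ = ⋂ (X \ Cᵢ)`.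
Because each `Cᵢ` is an order-ideal and multiplication is monotone, `X \ C = ⋂_{a ∈ X} ↓a \ C`,
so a residual of a member of `D̄` by any subset of `P` is again an intersection of members of `D`;
symmetrically for `A / X`. The residuated law for `γ (A · B)` is then that of `𝒪(P)`, because
`γ (A · B) ⊆ C ↔ A · B ⊆ C` for every `C ∈ D̄`.
-/

open Set

section SInterClosure

variable {α : Type*} {D : Set (Set α)} {A : Set α}

def sInterClosure (D : Set (Set α)) : Set (Set α) := {A | ∃ S ⊆ D, A = ⋂₀ S}

theorem mem_sInterClosure_of_mem (hA : A ∈ D) : A ∈ sInterClosure D :=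
  ⟨{A}, singleton_subset_iff.2 hA, sInter_singleton A |>.symm⟩

theorem mem_sInterClosure_iff : A ∈ sInterClosure D ↔ A = ⋂₀ {B ∈ D | A ⊆ B} := by
  refine ⟨?_, fun h => ⟨_, fun _ hB => hB.1, h⟩⟩
  rintro ⟨S, hS, rfl⟩
  exact (subset_sInter fun _ hB => hB.2).antisymm
    (sInter_subset_sInter fun B hB => ⟨hS hB, sInter_subset_of_mem hB⟩)

theorem sInter_mem_sInterClosure {S : Set (Set α)} (hS : S ⊆ sInterClosure D) :
    ⋂₀ S ∈ sInterClosure D := by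
  refine mem_sInterClosure_iff.2 <| (subset_sInter fun _ hB => hB.2).antisymm ?_
  refine subset_sInter fun A hA => ?_
  rw [mem_sInterClosure_iff.1 (hS hA)]
  exact sInter_subset_sInter fun B hB => ⟨hB.1, (sInter_subset_of_mem hA).trans hB.2⟩

theorem biInter_mem_sInterClosure {ι : Type*} {s : Set ι} {f : ι → Set α}
    (hf : ∀ i ∈ s, f i ∈ sInterClosure D) : ⋂ i ∈ s, f i ∈ sInterClosure D :=
  sInter_image f s ▸ sInter_mem_sInterClosure (image_subset_iff.2 hf)

theorem isLowerSet_of_mem_sInterClosure [Preorder α] (hD : ∀ B ∈ D, IsLowerSet B)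
    (hA : A ∈ sInterClosure D) : IsLowerSet A := by
  obtain ⟨S, hS, rfl⟩ := hA
  exact isLowerSet_sInter fun B hB => hD B (hS hB)

end SInterClosure

section ClosureOperator

variable {α : Type*} {C : Set (Set α)} {A : Set α}

theorem subset_sInter_supersets (X : Set α) : X ⊆ ⋂₀ {B ∈ C | X ⊆ B} :=
  subset_sInter fun _ hB => hB.2

theorem sInter_supersets_subset_iff {X : Set α} (hA : A ∈ C) :
    ⋂₀ {B ∈ C | X ⊆ B} ⊆ A ↔ X ⊆ A :=
  ⟨(subset_sInter_supersets X).trans, fun h => sInter_subset_of_mem ⟨hA, h⟩⟩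

end ClosureOperator

section Residuals

variable {M : Type*} [Monoid M] {X A : Set M}

/-- `X \ A` in `𝒪(M)`. -/
def leftResidual (X A : Set M) : Set M := {z | ∀ x ∈ X, x * z ∈ A}

/-- `A / X` in `𝒪(M)`. -/
def rightResidual (A X : Set M) : Set M := {z | ∀ x ∈ X, z * x ∈ A}

theorem mul_subset_iff_subset_leftResidual {B : Set M} : A * B ⊆ X ↔ B ⊆ leftResidual A X := by
  rw [mul_subset_iff]
  exact ⟨fun h _ hb _ ha => h _ ha _ hb, fun h _ ha _ hb => h hb _ ha⟩

theorem mul_subset_iff_subset_rightResidual {B : Set M} : A * B ⊆ X ↔ A ⊆ rightResidual X B :=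
  mul_subset_iff

theorem leftResidual_sInter (S : Set (Set M)) :
    leftResidual X (⋂₀ S) = ⋂ C ∈ S, leftResidual X C := by
  ext z
  simp only [leftResidual, mem_sInter, mem_iInter, mem_ofPred_eq]
  exact ⟨fun h C hC x hx => h x hx C hC, fun h x hx C hC => h C hC x hx⟩

theorem rightResidual_sInter (S : Set (Set M)) :
    rightResidual (⋂₀ S) X = ⋂ C ∈ S, rightResidual C X := by
  ext z
  simp only [rightResidual, mem_sInter, mem_iInter, mem_ofPred_eq]
  exact ⟨fun h C hC x hx => h x hx C hC, fun h x hx C hC => h C hC x hx⟩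

variable [Preorder M]

theorem leftResidual_eq_biInter_Iic [MulRightMono M] (hA : IsLowerSet A) :
    leftResidual X A = ⋂ a ∈ X, leftResidual (Iic a) A := by
  ext z
  simp only [leftResidual, mem_iInter, mem_ofPred_eq, mem_Iic]
  exact ⟨fun h a ha x hxa => hA (mul_le_mul_left hxa z) (h a ha),
    fun h a ha => h a ha a le_rfl⟩

theorem rightResidual_eq_biInter_Iic [MulLeftMono M] (hA : IsLowerSet A) :
    rightResidual A X = ⋂ a ∈ X, rightResidual A (Iic a) := by
  ext z
  simp only [rightResidual, mem_iInter, mem_ofPred_eq, mem_Iic]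
  exact ⟨fun h a ha x hxa => hA (mul_le_mul_right hxa z) (h a ha),
    fun h a ha => h a ha a le_rfl⟩

variable {D : Set (Set M)}

theorem leftResidual_mem_sInterClosure [MulRightMono M] (hD : ∀ B ∈ D, IsLowerSet B)
    (hres : ∀ a, ∀ B ∈ D, leftResidual (Iic a) B ∈ D) (X : Set M) (hA : A ∈ sInterClosure D) :
    leftResidual X A ∈ sInterClosure D := by
  obtain ⟨S, hS, rfl⟩ := hA
  rw [leftResidual_sInter]
  refine biInter_mem_sInterClosure fun C hC => ?_
  rw [leftResidual_eq_biInter_Iic (hD C (hS hC))]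
  exact biInter_mem_sInterClosure fun a _ => mem_sInterClosure_of_mem (hres a C (hS hC))

theorem rightResidual_mem_sInterClosure [MulLeftMono M] (hD : ∀ B ∈ D, IsLowerSet B)
    (hres : ∀ a, ∀ B ∈ D, rightResidual B (Iic a) ∈ D) (X : Set M) (hA : A ∈ sInterClosure D) :
    rightResidual A X ∈ sInterClosure D := by
  obtain ⟨S, hS, rfl⟩ := hA
  rw [rightResidual_sInter]
  refine biInter_mem_sInterClosure fun C hC => ?_
  rw [rightResidual_eq_biInter_Iic (hD C (hS hC))]
  exact biInter_mem_sInterClosure fun a _ => mem_sInterClosure_of_mem (hres a C (hS hC))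

end Residuals

theorem generated_closure_system_nucleus_system_general {P : Type*} [Monoid P] [PartialOrder P]
    (hmul : ∀ a b c e : P, a ≤ b → c ≤ e → a * c ≤ b * e)
    (D : Set (Set P))
    (hDlow : ∀ b ∈ D, IsLowerSet b)
    (hDres : ∀ a : P, ∀ b ∈ D,
      {z | ∀ x : P, x ≤ a → x * z ∈ b} ∈ D ∧
      {z | ∀ x : P, x ≤ a → z * x ∈ b} ∈ D) :
    ∀ (Dbar : Set (Set P)) (γ : Set P → Set P),
      Dbar = {A | ∃ S ⊆ D, A = ⋂₀ S} →
      γ = (fun X => ⋂₀ {A ∈ Dbar | X ⊆ A}) →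
      -- D̄ consists of order-ideals
      ((∀ A ∈ Dbar, IsLowerSet A) ∧
       -- D̄ is a closure system of 𝒪(P): γ is the associated closure operator
       (∀ X : Set P, IsLowerSet X → X ⊆ γ X ∧ γ X ∈ Dbar) ∧
       -- D̄ is a nucleus-system: it is closed under residuals by order-ideals
       (∀ X : Set P, IsLowerSet X → ∀ A ∈ Dbar,
          {z | ∀ x ∈ X, x * z ∈ A} ∈ Dbar ∧ {z | ∀ x ∈ X, z * x ∈ A} ∈ Dbar) ∧
       -- hence D̄ is a residuated lattice under x ∘ y = γ (x · y)
       (∀ A ∈ Dbar, ∀ B ∈ Dbar, ∀ C ∈ Dbar,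
          (γ (A * B) ⊆ C ↔ B ⊆ {z | ∀ x ∈ A, x * z ∈ C}) ∧
          (γ (A * B) ⊆ C ↔ A ⊆ {z | ∀ y ∈ B, z * y ∈ C}))) := by
  rintro Dbar γ rfl rfl
  have : MulLeftMono P := ⟨fun a _ _ h => hmul a a _ _ le_rfl h⟩
  have : MulRightMono P := ⟨fun a _ _ h => hmul _ _ a a h le_rfl⟩
  refine ⟨fun A => isLowerSet_of_mem_sInterClosure hDlow,
    fun X _ => ⟨subset_sInter_supersets X, sInter_mem_sInterClosure fun _ hA => hA.1⟩,
    fun X _ A hA => ⟨leftResidual_mem_sInterClosure hDlow (fun a B hB => (hDres a B hB).1) X hA,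
      rightResidual_mem_sInterClosure hDlow (fun a B hB => (hDres a B hB).2) X hA⟩,
    fun A _ B _ C hC => ?_⟩
  rw [sInter_supersets_subset_iff hC]
  exact ⟨mul_subset_iff_subset_leftResidual, mul_subset_iff_subset_rightResidual⟩

/-- Let `P` be an integral pomonoid and `D` a nonempty family of
order-ideals of `P` such that for every `a ∈ P` (identified with the principal
ideal `↓a`) and `b ∈ D`, the residuals `↓a \ b` and `b / ↓a` (computed in the
order-ideal residuated lattice `𝒪(P)`, i.e. as set-residuals) belong to `D`.
Then the closure system `D̄ = {⋂S : S ⊆ D}` generated by `D` is a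
nucleus-system of `𝒪(P)`, and hence is a residuated lattice under
`x ∘ y = γ_{D̄}(x·y)`. -/
theorem generated_closure_system_nucleus_system {P : Type*} [Monoid P] [PartialOrder P]
    (hmul : ∀ a b c e : P, a ≤ b → c ≤ e → a * c ≤ b * e)
    (hint : ∀ x : P, x ≤ 1)
    (D : Set (Set P)) (hne : D.Nonempty)
    (hDlow : ∀ b ∈ D, IsLowerSet b)
    (hDres : ∀ a : P, ∀ b ∈ D,
      {z | ∀ x : P, x ≤ a → x * z ∈ b} ∈ D ∧
      {z | ∀ x : P, x ≤ a → z * x ∈ b} ∈ D) :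
    ∀ (Dbar : Set (Set P)) (γ : Set P → Set P),
      Dbar = {A | ∃ S ⊆ D, A = ⋂₀ S} →
      γ = (fun X => ⋂₀ {A ∈ Dbar | X ⊆ A}) →
      -- D̄ consists of order-ideals
      ((∀ A ∈ Dbar, IsLowerSet A) ∧
       -- D̄ is a closure system of 𝒪(P): γ is the associated closure operator
       (∀ X : Set P, IsLowerSet X → X ⊆ γ X ∧ γ X ∈ Dbar) ∧
       -- D̄ is a nucleus-system: it is closed under residuals by order-ideals
       (∀ X : Set P, IsLowerSet X → ∀ A ∈ Dbar,
          {z | ∀ x ∈ X, x * z ∈ A} ∈ Dbar ∧ {z | ∀ x ∈ X, z * x ∈ A} ∈ Dbar) ∧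
       -- hence D̄ is a residuated lattice under x ∘ y = γ (x · y)
       (∀ A ∈ Dbar, ∀ B ∈ Dbar, ∀ C ∈ Dbar,
          (γ (A * B) ⊆ C ↔ B ⊆ {z | ∀ x ∈ A, x * z ∈ C}) ∧
          (γ (A * B) ⊆ C ↔ A ⊆ {z | ∀ y ∈ B, z * y ∈ C}))) :=
  generated_closure_system_nucleus_system_general hmul D hDlow hDres
end

section
/- Let L be a language with finitely many operation symbols, K a class of L-algebras, and A an L-algebra. If every finite partial subalgebra of A embeds into a finite member of K (FEP), then every finite full partial subalgebra of A fully embeds into a finite member of K (FEP⁺); conversely FEP⁺ always implies FEP. -/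
universe u v

/-- A partial algebra for a signature `σ` with arities `ar`: a carrier together
with partially-defined operations (modeled via `Option`). -/
structure PAlg (σ : Type u) (ar : σ → ℕ) : Type (max u (v + 1)) where
  carrier : Type v
  op : ∀ s : σ, (Fin (ar s) → carrier) → Option carrier

namespace PAlg

variable {σ : Type u} {ar : σ → ℕ}

/-- A homomorphism of partial algebras: it preserves every defined operation. -/
def IsHom (A B : PAlg σ ar) (φ : A.carrier → B.carrier) : Prop :=
  ∀ (s : σ) (args : Fin (ar s) → A.carrier) (a : A.carrier),
    A.op s args = some a → B.op s (φ ∘ args) = some (φ a)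

/-- A partial algebra is total (i.e. an algebra) if all operations are defined. -/
def IsTotal (A : PAlg σ ar) : Prop :=
  ∀ (s : σ) (args : Fin (ar s) → A.carrier), (A.op s args).isSome

/-- The map `φ : A → B` is full: whenever an operation of `B` applied to images of
arguments from `A` yields an image of an element of `A`, the corresponding
operation is already defined in `A`.  (A full embedding is an injective
homomorphism that is full; its image is then a full partial subalgebra.) -/
def IsFullInto (A B : PAlg σ ar) (φ : A.carrier → B.carrier) : Prop :=
  ∀ (s : σ) (args : Fin (ar s) → A.carrier) (a : A.carrier),
    B.op s (φ ∘ args) = some (φ a) → A.op s args = some a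

/-- `A` has the finite embeddability property in the class `K`: every finite
partial subalgebra of `A` (i.e. finite partial algebra embedded in `A`) embeds
into a finite (total) member of `K`. -/
def FEP (K : PAlg.{u, v} σ ar → Prop) (A : PAlg.{u, v} σ ar) : Prop :=
  ∀ B : PAlg.{u, v} σ ar, Finite B.carrier →
    ∀ φ : B.carrier → A.carrier, Function.Injective φ → IsHom B A φ →
      ∃ C : PAlg σ ar, K C ∧ Finite C.carrier ∧ IsTotal C ∧
        ∃ ψ : B.carrier → C.carrier, Function.Injective ψ ∧ IsHom B C ψ

/-- `A` has the full finite embeddability property in `K`: every finite full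
partial subalgebra of `A` fully embeds into a finite (total) member of `K`. -/
def FEPplus (K : PAlg.{u, v} σ ar → Prop) (A : PAlg.{u, v} σ ar) : Prop :=
  ∀ B : PAlg.{u, v} σ ar, Finite B.carrier →
    ∀ φ : B.carrier → A.carrier, Function.Injective φ → IsHom B A φ →
      IsFullInto B A φ →
      ∃ C : PAlg σ ar, K C ∧ Finite C.carrier ∧ IsTotal C ∧
        ∃ ψ : B.carrier → C.carrier, Function.Injective ψ ∧ IsHom B C ψ ∧
          IsFullInto B C ψ

end PAlg

/-! If `B` is a finite full partial subalgebra of the total algebra `A` and there are finitely many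
operation symbols, the set `S` of elements of `B` together with all values of operations on
tuples from `B` is finite. The full partial subalgebra on `S` embeds into a finite `C ∈ K` by the
FEP; every operation on a tuple from `B` is defined in `S`, so by injectivity a value in `C` that
lands in the image of `B` is already the image of the value in `S`, which lies in `B` by fullness.
Conversely, a finite partial subalgebra embeds into the full one on the same elements, and the
FEP⁺ applies to the latter. -/

namespace PAlg

variable {σ : Type u} {ar : σ → ℕ}

theorem IsHom.comp {B D C : PAlg σ ar} {g : B.carrier → D.carrier} {ψ : D.carrier → C.carrier}
    (hψ : IsHom D C ψ) (hg : IsHom B D g) : IsHom B C (ψ ∘ g) :=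
  fun s args a h => hψ s (g ∘ args) (g a) (hg s args a h)

theorem isFullInto_comp {B D C : PAlg σ ar} {g : B.carrier → D.carrier}
    {ψ : D.carrier → C.carrier} (hg : IsFullInto B D g)
    (hg_def : ∀ s args, (D.op s (g ∘ args)).isSome) (hψ : IsHom D C ψ)
    (hψ_inj : Function.Injective ψ) : IsFullInto B C (ψ ∘ g) := by
  intro s args a h
  obtain ⟨d, hd⟩ := Option.isSome_iff_exists.mp (hg_def s args)
  have hψd : ψ d = ψ (g a) := Option.some_inj.mp ((hψ s _ d hd).symm.trans h)
  exact hg s args a (hψ_inj hψd ▸ hd)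

open Classical in
/-- The full partial algebra induced on `β` by `φ : β → A`; for an injective `φ` this is
the full partial subalgebra of `A` on the image of `φ`. -/
noncomputable def pullback (A : PAlg σ ar) {β : Type v} (φ : β → A.carrier) : PAlg σ ar where
  carrier := β
  op s args := if h : ∃ b, A.op s (φ ∘ args) = some (φ b) then some h.choose else none

section pullback

variable {A : PAlg σ ar} {β : Type v} {φ : β → A.carrier}

theorem pullback_op_eq_some_iff (hφ : Function.Injective φ) {s : σ} {args : Fin (ar s) → β}
    {b : β} : (A.pullback φ).op s args = some b ↔ A.op s (φ ∘ args) = some (φ b) := by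
  simp only [pullback]
  constructor
  · intro h
    split_ifs at h with hex
    exact Option.some_inj.mp h ▸ hex.choose_spec
  · intro h
    have hex : ∃ b, A.op s (φ ∘ args) = some (φ b) := ⟨b, h⟩
    rw [dif_pos hex, hφ (Option.some_inj.mp (hex.choose_spec.symm.trans h))]

theorem isHom_pullback (hφ : Function.Injective φ) : IsHom (A.pullback φ) A φ :=
  fun _ _ _ => (pullback_op_eq_some_iff hφ).mp

theorem isFullInto_pullback (hφ : Function.Injective φ) : IsFullInto (A.pullback φ) A φ :=
  fun _ _ _ => (pullback_op_eq_some_iff hφ).mpr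

theorem IsHom.pullback {B : PAlg σ ar} {g : B.carrier → β} (hφ : Function.Injective φ)
    (hg : IsHom B A (φ ∘ g)) : IsHom B (A.pullback φ) g :=
  fun s args a h => (pullback_op_eq_some_iff hφ).mpr (hg s args a h)

theorem IsFullInto.pullback {B : PAlg σ ar} {g : B.carrier → β} (hφ : Function.Injective φ)
    (hg : IsFullInto B A (φ ∘ g)) : IsFullInto B (A.pullback φ) g :=
  fun s args a h => hg s args a ((pullback_op_eq_some_iff hφ).mp h)

end pullback

def oneStepClosure (A : PAlg σ ar) {β : Type*} (φ : β → A.carrier) : Set A.carrier :=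
  Set.range φ ∪ {a | ∃ s args, A.op s (φ ∘ args) = some a}

theorem finite_oneStepClosure [Finite σ] (A : PAlg σ ar) {β : Type*} [Finite β]
    (φ : β → A.carrier) : (A.oneStepClosure φ).Finite := by
  have hvalues : {a | ∃ s args, A.op s (φ ∘ args) = some a} =
      some ⁻¹' Set.range (fun p : Σ s, Fin (ar s) → β => A.op p.1 (φ ∘ p.2)) := by
    ext a
    simp [eq_comm]
  refine (Set.finite_range φ).union ?_
  rw [hvalues]
  exact (Set.finite_range _).preimage (Option.some_injective _).injOn

variable {K : PAlg.{u, v} σ ar → Prop} {A : PAlg.{u, v} σ ar}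

theorem FEP.fepPlus [Finite σ] (hA : IsTotal A) (hfep : FEP K A) : FEPplus K A := by
  intro B hB φ hφ hhom hfull
  let S := A.oneStepClosure φ
  have : Finite S := (A.finite_oneStepClosure φ).to_subtype
  let ι : B.carrier → S := fun b => ⟨φ b, Or.inl ⟨b, rfl⟩⟩
  have hval : Function.Injective (Subtype.val : S → A.carrier) := Subtype.val_injective
  obtain ⟨C, hKC, hC, hCtot, ψ, hψ, hψhom⟩ :=
    hfep (A.pullback Subtype.val) this Subtype.val hval (isHom_pullback hval)
  have hι_def : ∀ s args, ((A.pullback Subtype.val).op s (ι ∘ args)).isSome := by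
    intro s args
    obtain ⟨v, hv⟩ := Option.isSome_iff_exists.mp (hA s (φ ∘ args))
    exact Option.isSome_iff_exists.mpr
      ⟨⟨v, Or.inr ⟨s, args, hv⟩⟩, (pullback_op_eq_some_iff hval).mpr hv⟩
  refine ⟨C, hKC, hC, hCtot, ψ ∘ ι, hψ.comp fun _ _ h => hφ (congrArg Subtype.val h),
    hψhom.comp (hhom.pullback hval), ?_⟩
  exact isFullInto_comp (hfull.pullback hval) hι_def hψhom hψ

theorem FEPplus.fep (hplus : FEPplus K A) : FEP K A := by
  intro B hB φ hφ hhom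
  obtain ⟨C, hKC, hC, hCtot, ψ, hψ, hψhom, -⟩ :=
    hplus (A.pullback φ) hB φ hφ (isHom_pullback hφ) (isFullInto_pullback hφ)
  exact ⟨C, hKC, hC, hCtot, ψ, hψ, hψhom.comp (hhom.pullback (g := id) hφ)⟩

end PAlg

/-- For a language with finitely many operation symbols, the FEP
of an algebra `A` in a class `K` implies the FEP⁺; conversely, FEP⁺ always
implies FEP. -/
theorem fep_iff_fep_plus {σ : Type u} {ar : σ → ℕ}
    (K : PAlg σ ar → Prop) (A : PAlg σ ar) (hA : PAlg.IsTotal A) :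
    (Finite σ → PAlg.FEP K A → PAlg.FEPplus K A) ∧
    (PAlg.FEPplus K A → PAlg.FEP K A) :=
  ⟨fun _ hfep => hfep.fepPlus hA, PAlg.FEPplus.fep⟩
end
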